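/- Let γ : ℝ → ℝ³ be a non-degenerate C² curve on S² and let f_z (for z ∈ ℝ³) be the associated projection maps. There exist constants 0 < c₀ ≤ C₀ < ∞ depending only on γ such that for all y, z ∈ ℝ³ with |y| ≤ 1/2 and |z| ≤ 1/2: (i) |f_y(θ) − f_z(θ)| + |f_y'(θ) − f_z'(θ)| ≥ c₀ |y − z| for every θ ∈ [0,1]; and (ii) |f_y(θ) − f_z(θ)| + |f_y'(θ) − f_z'(θ)| ≤ C₀ |y − z| for every θ ∈ [0,1]. In particular the family {f_z : |z| ≤ 1/2} is a cinematic family of maps, bi-Lipschitz homeomorphic to the ball B(0,1/2). -/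

import Mathlib

/-!
Since `z ↦ f_z(θ)` is linear, `f_y - f_z = f_{y-z}`, and `w ↦ |f_w(θ)| + |f_w'(θ)|` is positively
homogeneous and jointly continuous in `(θ, w)` wherever `γ' ≠ 0`. By compactness of
`[0,1] × S²`, both bounds follow once this quantity is positive for `w ≠ 0`. If it vanishes, `w` is
orthogonal to `γ'`, to `γ × γ'` and (from the first component of `f_w'`) to `γ''`. Differentiating
`|γ|² = 1` twice gives `⟨γ, γ'⟩ = 0` and `⟨γ, γ''⟩ = -|γ'|²`, so the triple product of these three
vectors is `|γ'|² ⟨γ, γ''⟩ = -|γ'|⁴ ≠ 0`, and hence `w = 0`.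
-/

open MeasureTheory Set
open scoped ENNReal NNReal

/-- The cross product on `ℝ³ = EuclideanSpace ℝ (Fin 3)`. -/
noncomputable def cross3 (a b : EuclideanSpace ℝ (Fin 3)) : EuclideanSpace ℝ (Fin 3) :=
  (EuclideanSpace.equiv (Fin 3) ℝ).symm
    ![a 1 * b 2 - a 2 * b 1, a 2 * b 0 - a 0 * b 2, a 0 * b 1 - a 1 * b 0]

/-- For a curve `γ` on `S²`, normalisation constant `M`, and `z ∈ ℝ³`, the projection map
`f_z(θ) = (⟨z, γ'(θ)/M⟩, ⟨z, ν(θ)⟩)` where `ν(θ) = γ(θ) × γ'(θ)/|γ'(θ)|`. -/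
noncomputable def fmap (γ : ℝ → EuclideanSpace ℝ (Fin 3)) (M : ℝ)
    (z : EuclideanSpace ℝ (Fin 3)) (θ : ℝ) : EuclideanSpace ℝ (Fin 2) :=
  (EuclideanSpace.equiv (Fin 2) ℝ).symm
    ![(inner ℝ z (M⁻¹ • deriv γ θ) : ℝ),
      (inner ℝ z ((‖deriv γ θ‖)⁻¹ • cross3 (γ θ) (deriv γ θ)) : ℝ)]

open Metric
open scoped RealInnerProductSpace

local notation "ℝ³" => EuclideanSpace ℝ (Fin 3)

section Homogeneous

variable {X E : Type*} [TopologicalSpace X] [NormedAddCommGroup E] [NormedSpace ℝ E]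
  [ProperSpace E]

theorem exists_norm_bounds_of_homogeneous {K : Set X} (hK : IsCompact K) {F : X → E → ℝ}
    (hcont : ContinuousOn (fun p : X × E => F p.1 p.2) (K ×ˢ sphere 0 1))
    (hsmul : ∀ x ∈ K, ∀ (r : ℝ) (w : E), 0 ≤ r → F x (r • w) = r * F x w)
    (hpos : ∀ x ∈ K, ∀ w : E, w ≠ 0 → 0 < F x w) :
    ∃ c C : ℝ, 0 < c ∧ c ≤ C ∧ ∀ x ∈ K, ∀ w : E, c * ‖w‖ ≤ F x w ∧ F x w ≤ C * ‖w‖ := by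
  have hKS : IsCompact (K ×ˢ sphere (0 : E) 1) := hK.prod (isCompact_sphere 0 1)
  obtain ⟨c, hc, hcF⟩ := hKS.exists_forall_le' hcont fun p hp =>
    hpos p.1 hp.1 p.2 (ne_zero_of_mem_unit_sphere ⟨p.2, hp.2⟩)
  obtain ⟨C, hCF⟩ := hKS.exists_bound_of_continuousOn hcont
  refine ⟨c, max c C, hc, le_max_left c C, fun x hx w => ?_⟩
  rcases eq_or_ne w 0 with rfl | hw
  · have h0 : F x 0 = 0 := by simpa using hsmul x hx 0 0 le_rfl
    simp [h0]
  have hw' : ‖w‖⁻¹ • w ∈ sphere (0 : E) 1 := by simp [norm_smul, hw]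
  have hFw : F x w = F x (‖w‖⁻¹ • w) * ‖w‖ := by
    rw [mul_comm, ← hsmul x hx _ _ (norm_nonneg w), smul_inv_smul₀ (norm_ne_zero_iff.2 hw)]
  rw [hFw]
  constructor
  · exact mul_le_mul_of_nonneg_right (hcF (x, _) ⟨hx, hw'⟩) (norm_nonneg w)
  · refine mul_le_mul_of_nonneg_right ?_ (norm_nonneg w)
    exact (le_abs_self _).trans ((hCF (x, _) ⟨hx, hw'⟩).trans (le_max_right c C))

end Homogeneous

section CrossProduct

@[simp] lemma cross3_apply_zero (a b : ℝ³) : cross3 a b 0 = a 1 * b 2 - a 2 * b 1 := rfl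
@[simp] lemma cross3_apply_one (a b : ℝ³) : cross3 a b 1 = a 2 * b 0 - a 0 * b 2 := rfl
@[simp] lemma cross3_apply_two (a b : ℝ³) : cross3 a b 2 = a 0 * b 1 - a 1 * b 0 := rfl

lemma inner_eq_sum_three (a b : ℝ³) : ⟪a, b⟫ = a 0 * b 0 + a 1 * b 1 + a 2 * b 2 := by
  simp only [PiLp.inner_apply, Fin.sum_univ_three, RCLike.inner_apply, conj_trivial]
  ring

theorem inner_cross3_smul (x y z w : ℝ³) :
    ⟪x, cross3 y z⟫ • w = ⟪w, x⟫ • cross3 y z + ⟪w, y⟫ • cross3 z x + ⟪w, z⟫ • cross3 x y := by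
  ext i
  fin_cases i <;>
    simp only [inner_eq_sum_three, cross3_apply_zero, cross3_apply_one, cross3_apply_two,
      PiLp.smul_apply, PiLp.add_apply, smul_eq_mul, Fin.zero_eta, Fin.mk_one,
      Fin.reduceFinMk] <;>
    ring

theorem eq_zero_of_inner_eq_zero_of_inner_cross3_ne_zero {x y z w : ℝ³}
    (hxyz : ⟪x, cross3 y z⟫ ≠ 0) (hx : ⟪w, x⟫ = 0) (hy : ⟪w, y⟫ = 0) (hz : ⟪w, z⟫ = 0) :
    w = 0 := by
  have h := inner_cross3_smul x y z w
  rw [hx, hy, hz] at h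
  simpa [hxyz] using h

theorem inner_cross3_cross3 (u v a : ℝ³) :
    ⟪v, cross3 (cross3 u v) a⟫ = ‖v‖ ^ 2 * ⟪u, a⟫ - ⟪u, v⟫ * ⟪v, a⟫ := by
  rw [← real_inner_self_eq_norm_sq]
  simp only [inner_eq_sum_three, cross3_apply_zero, cross3_apply_one, cross3_apply_two]
  ring

theorem eq_zero_of_inner_eq_zero_of_frame {u v a w : ℝ³} (huv : ⟪u, v⟫ = 0)
    (hua : ⟪u, a⟫ = -‖v‖ ^ 2) (hv : v ≠ 0) (h₁ : ⟪w, v⟫ = 0) (h₂ : ⟪w, cross3 u v⟫ = 0)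
    (h₃ : ⟪w, a⟫ = 0) : w = 0 := by
  refine eq_zero_of_inner_eq_zero_of_inner_cross3_ne_zero ?_ h₁ h₂ h₃
  rw [inner_cross3_cross3, huv, hua]
  simpa using norm_ne_zero_iff.2 hv

theorem ContDiff.cross3 {E : Type*} [NormedAddCommGroup E] [NormedSpace ℝ E] {n : WithTop ℕ∞}
    {f g : E → ℝ³} (hf : ContDiff ℝ n f) (hg : ContDiff ℝ n g) :
    ContDiff ℝ n fun x => cross3 (f x) (g x) := by
  have hf' := contDiff_euclidean.1 hf
  have hg' := contDiff_euclidean.1 hg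
  refine contDiff_euclidean.2 fun i => ?_
  fin_cases i
  · exact ((hf' 1).mul (hg' 2)).sub ((hf' 2).mul (hg' 1))
  · exact ((hf' 2).mul (hg' 0)).sub ((hf' 0).mul (hg' 2))
  · exact ((hf' 0).mul (hg' 1)).sub ((hf' 1).mul (hg' 0))

end CrossProduct

theorem deriv_eq_zero_of_eqOn_Icc {F : Type*} [NormedAddCommGroup F] [NormedSpace ℝ F]
    {f : ℝ → F} {a b x : ℝ} {c : F} (hab : a < b) (hf : EqOn f (fun _ => c) (Icc a b))
    (hx : x ∈ Icc a b) (hfx : DifferentiableAt ℝ f x) : deriv f x = 0 := by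
  rw [← hfx.derivWithin (uniqueDiffOn_Icc hab x hx), derivWithin_congr hf (hf hx),
    derivWithin_fun_const, Pi.zero_apply]

section SphereCurve

variable {γ : ℝ → ℝ³} {a b θ : ℝ}

theorem inner_deriv_eq_zero_of_norm_eq_one (hab : a < b) (hγ : Differentiable ℝ γ)
    (hsphere : ∀ t ∈ Icc a b, ‖γ t‖ = 1) (hθ : θ ∈ Icc a b) : ⟪γ θ, deriv γ θ⟫ = 0 := by
  have hconst : EqOn (fun t => ‖γ t‖ ^ 2) (fun _ => 1) (Icc a b) := fun t ht => by
    simp [hsphere t ht]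
  have hderiv := (hγ θ).hasDerivAt.norm_sq
  have h := deriv_eq_zero_of_eqOn_Icc hab hconst hθ hderiv.differentiableAt
  rw [hderiv.deriv] at h
  simpa using h

theorem inner_deriv_deriv_eq_of_norm_eq_one (hab : a < b) (hγ : Differentiable ℝ γ)
    (hγ' : Differentiable ℝ (deriv γ)) (hsphere : ∀ t ∈ Icc a b, ‖γ t‖ = 1)
    (hθ : θ ∈ Icc a b) : ⟪γ θ, deriv (deriv γ) θ⟫ = -‖deriv γ θ‖ ^ 2 := by
  have hderiv := (hγ θ).hasDerivAt.inner ℝ (hγ' θ).hasDerivAt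
  have h := deriv_eq_zero_of_eqOn_Icc hab
    (fun t ht => inner_deriv_eq_zero_of_norm_eq_one hab hγ hsphere ht) hθ hderiv.differentiableAt
  rw [hderiv.deriv, real_inner_self_eq_norm_sq] at h
  linarith

noncomputable def unitNormal (γ : ℝ → ℝ³) (θ : ℝ) : ℝ³ :=
  ‖deriv γ θ‖⁻¹ • cross3 (γ θ) (deriv γ θ)

theorem contDiffAt_unitNormal (hγ : ContDiff ℝ 2 γ) (hθ : deriv γ θ ≠ 0) :
    ContDiffAt ℝ 1 (unitNormal γ) θ := by
  have hγ' : ContDiff ℝ 1 (deriv γ) := hγ.deriv'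
  exact ((hγ'.contDiffAt.norm ℝ hθ).inv (norm_ne_zero_iff.2 hθ)).smul
    ((hγ.of_le one_le_two).cross3 hγ').contDiffAt

end SphereCurve

section InnerPair

variable {E : Type*} [NormedAddCommGroup E] [InnerProductSpace ℝ E]

noncomputable def innerPair (u v w : E) : EuclideanSpace ℝ (Fin 2) :=
  (EuclideanSpace.equiv (Fin 2) ℝ).symm ![⟪w, u⟫, ⟪w, v⟫]

theorem innerPair_sub (u v y z : E) :
    innerPair u v (y - z) = innerPair u v y - innerPair u v z := by
  ext i
  fin_cases i <;> simp [innerPair, inner_sub_left]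

theorem innerPair_smul (u v : E) (r : ℝ) (w : E) :
    innerPair u v (r • w) = r • innerPair u v w := by
  ext i
  fin_cases i <;> simp [innerPair, real_inner_smul_left]

theorem innerPair_eq_zero_iff {u v w : E} :
    innerPair u v w = 0 ↔ ⟪w, u⟫ = 0 ∧ ⟪w, v⟫ = 0 := by
  simp only [innerPair, ContinuousLinearEquiv.map_eq_zero_iff, Matrix.cons_eq_zero_iff,
    Matrix.zero_empty, and_true]

theorem ContinuousAt.innerPair {X : Type*} [TopologicalSpace X] {u v w : X → E} {x : X}
    (hu : ContinuousAt u x) (hv : ContinuousAt v x) (hw : ContinuousAt w x) :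
    ContinuousAt (fun x => innerPair (u x) (v x) (w x)) x := by
  refine (EuclideanSpace.equiv (Fin 2) ℝ).symm.continuous.continuousAt.comp
    (continuousAt_pi.2 fun i => ?_)
  fin_cases i
  · exact hw.inner hu
  · exact hw.inner hv

theorem HasDerivAt.innerPair {u v : ℝ → E} {u' v' : E} {θ : ℝ} (hu : HasDerivAt u u' θ)
    (hv : HasDerivAt v v' θ) (w : E) :
    HasDerivAt (fun t => innerPair (u t) (v t) w) (innerPair u' v' w) θ := by
  refine (EuclideanSpace.equiv (Fin 2) ℝ).symm.hasFDerivAt.comp_hasDerivAt θ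
    (hasDerivAt_pi.2 fun i => ?_)
  fin_cases i
  · exact (innerSL ℝ w).hasFDerivAt.comp_hasDerivAt θ hu
  · exact (innerSL ℝ w).hasFDerivAt.comp_hasDerivAt θ hv

end InnerPair

section Projection

variable {γ : ℝ → ℝ³} {a b θ : ℝ}

theorem fmap_eq_innerPair (γ : ℝ → ℝ³) (M : ℝ) (z : ℝ³) (θ : ℝ) :
    fmap γ M z θ = innerPair (M⁻¹ • deriv γ θ) (unitNormal γ θ) z := rfl

theorem hasDerivAt_fmap (hγ : ContDiff ℝ 2 γ) (M : ℝ) (z : ℝ³) (hθ : deriv γ θ ≠ 0) :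
    HasDerivAt (fmap γ M z)
      (innerPair (M⁻¹ • deriv (deriv γ) θ) (deriv (unitNormal γ) θ) z) θ :=
  ((hγ.differentiable_deriv_two θ).hasDerivAt.const_smul M⁻¹).innerPair
    ((contDiffAt_unitNormal hγ hθ).differentiableAt one_ne_zero).hasDerivAt z

/-- `‖f_w(θ)‖ + ‖f_w'(θ)‖`, with `f_w'(θ)` given by `hasDerivAt_fmap`. -/
noncomputable def jetNorm (γ : ℝ → ℝ³) (M θ : ℝ) (w : ℝ³) : ℝ :=
  ‖innerPair (M⁻¹ • deriv γ θ) (unitNormal γ θ) w‖ +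
    ‖innerPair (M⁻¹ • deriv (deriv γ) θ) (deriv (unitNormal γ) θ) w‖

theorem jetNorm_smul (γ : ℝ → ℝ³) (M θ : ℝ) {r : ℝ} (hr : 0 ≤ r) (w : ℝ³) :
    jetNorm γ M θ (r • w) = r * jetNorm γ M θ w := by
  simp only [jetNorm, innerPair_smul, norm_smul, Real.norm_of_nonneg hr]
  ring

theorem continuousAt_jetNorm (hγ : ContDiff ℝ 2 γ) (M : ℝ) {p : ℝ × ℝ³}
    (hp : deriv γ p.1 ≠ 0) : ContinuousAt (fun q : ℝ × ℝ³ => jetNorm γ M q.1 q.2) p := by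
  have hν := contDiffAt_unitNormal hγ hp
  have hγ' := (hγ.continuous_deriv one_le_two).const_smul M⁻¹
  have hγ'' := ((hγ.deriv' (n := 1)).continuous_deriv le_rfl).const_smul M⁻¹
  refine .add (.norm ?_) (.norm ?_)
  · exact (hγ'.continuousAt.comp continuousAt_fst).innerPair
      (hν.continuousAt.comp continuousAt_fst) continuousAt_snd
  · exact (hγ''.continuousAt.comp continuousAt_fst).innerPair
      ((hν.derivWithin (m := 0) le_rfl).continuousAt.comp continuousAt_fst) continuousAt_snd

theorem jetNorm_pos (hab : a < b) (hγ : ContDiff ℝ 2 γ) (hsphere : ∀ t ∈ Icc a b, ‖γ t‖ = 1)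
    (hθ : θ ∈ Icc a b) (hγθ : deriv γ θ ≠ 0) {M : ℝ} (hM : M ≠ 0) {w : ℝ³} (hw : w ≠ 0) :
    0 < jetNorm γ M θ w := by
  refine lt_of_le_of_ne (add_nonneg (norm_nonneg _) (norm_nonneg _)) fun h => hw ?_
  obtain ⟨h₀, h₁⟩ := (add_eq_zero_iff_of_nonneg (norm_nonneg _) (norm_nonneg _)).1 h.symm
  rw [norm_eq_zero, innerPair_eq_zero_iff, unitNormal, real_inner_smul_right,
    real_inner_smul_right] at h₀
  rw [norm_eq_zero, innerPair_eq_zero_iff, real_inner_smul_right] at h₁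
  simp only [mul_eq_zero, inv_eq_zero, hM, norm_eq_zero, hγθ, false_or] at h₀ h₁
  have hd : Differentiable ℝ γ := hγ.differentiable two_ne_zero
  exact eq_zero_of_inner_eq_zero_of_frame
    (inner_deriv_eq_zero_of_norm_eq_one hab hd hsphere hθ)
    (inner_deriv_deriv_eq_of_norm_eq_one hab hd hγ.differentiable_deriv_two hsphere hθ)
    hγθ h₀.1 h₀.2 h₁.1

end Projection

/-- For a non-degenerate C² curve `γ` on `S²`, the family of projection
maps `{f_z : |z| ≤ 1/2}` is cinematic: there are constants `0 < c₀ ≤ C₀ < ∞` depending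
only on `γ` such that for all `y, z` in the ball of radius `1/2` and all `θ ∈ [0,1]`,
`c₀|y−z| ≤ |f_y(θ) − f_z(θ)| + |f_y'(θ) − f_z'(θ)| ≤ C₀|y−z|`. -/
theorem stmt8 (γ : ℝ → EuclideanSpace ℝ (Fin 3))
    (hγ : ContDiff ℝ 2 γ)
    (hsphere : ∀ θ ∈ Icc (0:ℝ) 1, ‖γ θ‖ = 1)
    (hnondeg : ∀ θ ∈ Icc (0:ℝ) 1,
      LinearIndependent ℝ ![γ θ, deriv γ θ, deriv (deriv γ) θ])
    (M : ℝ) (hM : IsGreatest ((fun θ => ‖deriv γ θ‖) '' Icc (0:ℝ) 1) M) :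
    ∃ c₀ C₀ : ℝ, 0 < c₀ ∧ c₀ ≤ C₀ ∧
      ∀ y z : EuclideanSpace ℝ (Fin 3), ‖y‖ ≤ 1/2 → ‖z‖ ≤ 1/2 →
        ∀ θ ∈ Icc (0:ℝ) 1,
          c₀ * ‖y - z‖
              ≤ ‖fmap γ M y θ - fmap γ M z θ‖ +
                ‖deriv (fmap γ M y) θ - deriv (fmap γ M z) θ‖ ∧
          ‖fmap γ M y θ - fmap γ M z θ‖ +
              ‖deriv (fmap γ M y) θ - deriv (fmap γ M z) θ‖
            ≤ C₀ * ‖y - z‖ := by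
  have hne : ∀ θ ∈ Icc (0:ℝ) 1, deriv γ θ ≠ 0 := fun θ hθ => (hnondeg θ hθ).ne_zero 1
  have hM₀ : M ≠ 0 := by
    obtain ⟨θ, hθ, rfl⟩ := hM.1
    exact norm_ne_zero_iff.2 (hne θ hθ)
  obtain ⟨c, C, hc, hcC, hbound⟩ := exists_norm_bounds_of_homogeneous isCompact_Icc
    (fun p hp => (continuousAt_jetNorm hγ M (hne p.1 hp.1)).continuousWithinAt)
    (fun θ _ r w hr => jetNorm_smul γ M θ hr w)
    (fun θ hθ w hw => jetNorm_pos zero_lt_one hγ hsphere hθ (hne θ hθ) hM₀ hw)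
  refine ⟨c, C, hc, hcC, fun y z _ _ θ hθ => ?_⟩
  rw [(hasDerivAt_fmap hγ M y (hne θ hθ)).deriv, (hasDerivAt_fmap hγ M z (hne θ hθ)).deriv,
    fmap_eq_innerPair, fmap_eq_innerPair, ← innerPair_sub, ← innerPair_sub]
  exact hbound θ hθ (y - z)
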